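/- Let n be a natural number, let k, l, γ, δ ∈ Fin n with k ≠ l and γ ≠ δ, and let a₁, a₂ be nonzero complex numbers. Define the n×n complex matrices T₁ = E_{kl} + a₁·E_{lk} and T₂ = E_{γδ} + a₂·E_{δγ}. Then T₁ and T₂ commute (T₁T₂ = T₂T₁) if and only if one of the following holds: (i) k = γ, l = δ and a₁ = a₂ (so T₁ = T₂); (ii) k = δ, l = γ and a₁·a₂ = 1 (so T₁ is proportional to T₂); or (iii) k, l, γ, δ are pairwise distinct. -/

import Mathlib

/-!
Each index coincidence `l = γ`, `l = δ`, `k = γ`, `k = δ` contributes one singleton to `T₁ T₂`,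
so `T₁ T₂ = 0 = T₂ T₁` for pairwise distinct indices. Comparing `T₁ T₂` with `T₂ T₁` at the entry
hit by such a singleton shows that a coincidence `k = γ` or `l = δ` forces the other one together
with `a₁ = a₂`, and a coincidence `k = δ` or `l = γ` forces the other one together with
`a₁ a₂ = 1`, in which case `T₂ = a₂ T₁`.
-/

open Matrix

variable {ι R : Type*} [DecidableEq ι]

def excitation [Semiring R] (k l : ι) (a : R) : Matrix ι ι R :=
  single k l 1 + a • single l k 1

theorem excitation_swap [CommSemiring R] {k l : ι} {a b : R} (hab : a * b = 1) :
    excitation l k b = b • excitation k l a := by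
  simp only [excitation, smul_add, smul_smul, mul_comm b a, hab, one_smul]
  rw [add_comm]

section Semiring

variable [Fintype ι] [Semiring R]

theorem single_mul_single_eq_ite (i j p q : ι) (c d : R) :
    single i j c * single p q d = if j = p then single i q (c * d) else 0 := by
  split_ifs with h
  · rw [h, single_mul_single_same]
  · exact single_mul_single_of_ne (c := c) i j p h d

theorem excitation_mul_excitation (k l γ δ : ι) (a b : R) :
    excitation k l a * excitation γ δ b =
      (if l = γ then single k δ 1 else 0) + (if l = δ then single k γ b else 0) +
        (if k = γ then single l δ a else 0) + (if k = δ then single l γ (a * b) else 0) := by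
  simp only [excitation, smul_single, smul_eq_mul, mul_one, add_mul, mul_add,
    single_mul_single_eq_ite, one_mul]
  abel

theorem excitation_mul_excitation_of_pairwise_ne {k l γ δ : ι}
    (hkγ : k ≠ γ) (hkδ : k ≠ δ) (hlγ : l ≠ γ) (hlδ : l ≠ δ) (a b : R) :
    excitation k l a * excitation γ δ b = 0 := by
  simp [excitation_mul_excitation, hkγ, hkδ, hlγ, hlδ]

end Semiring

theorem commute_excitation_iff [Fintype ι] [CommSemiring R] [NoZeroDivisors R] [Nontrivial R]
    {k l γ δ : ι} (hkl : k ≠ l) (hγδ : γ ≠ δ) {a b : R} (ha : a ≠ 0) (hb : b ≠ 0) :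
    Commute (excitation k l a) (excitation γ δ b) ↔
      (k = γ ∧ l = δ ∧ a = b) ∨ (k = δ ∧ l = γ ∧ a * b = 1) ∨
        (k ≠ γ ∧ k ≠ δ ∧ l ≠ γ ∧ l ≠ δ) := by
  constructor
  · intro h
    have entry : ∀ i j, (excitation k l a * excitation γ δ b) i j =
        (excitation γ δ b * excitation k l a) i j := fun i j => by rw [h.eq]
    simp only [excitation_mul_excitation, Matrix.add_apply, Matrix.ite_apply, single_apply,
      Matrix.zero_apply] at entry
    have hkγ : k = γ → l = δ ∧ a = b := by
      rintro rfl
      simpa [hkl, hkl.symm, hγδ, hγδ.symm, eq_ite_iff, ha, eq_comm] using entry l δ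
    have hkδ : k = δ → l = γ ∧ a * b = 1 := by
      rintro rfl
      simpa [hkl, hkl.symm, hγδ, hγδ.symm, eq_ite_iff, ha, hb, eq_comm] using entry l γ
    have hlγ : l = γ → k = δ ∧ b * a = 1 := by
      rintro rfl
      simpa [hkl, hkl.symm, hγδ, hγδ.symm, ite_eq_iff, eq_comm] using entry k δ
    have hlδ : l = δ → k = γ ∧ a = b := by
      rintro rfl
      simpa [hkl, hkl.symm, hγδ, hγδ.symm, eq_ite_iff, hb, eq_comm] using entry k γ
    tauto
  · rintro (⟨rfl, rfl, rfl⟩ | ⟨rfl, rfl, hab⟩ | ⟨hkγ, hkδ, hlγ, hlδ⟩)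
    · exact Commute.refl _
    · rw [excitation_swap hab]
      exact (Commute.refl _).smul_right b
    · exact (excitation_mul_excitation_of_pairwise_ne hkγ hkδ hlγ hlδ a b).trans
        (excitation_mul_excitation_of_pairwise_ne hkγ.symm hlγ.symm hkδ.symm hlδ.symm b a).symm

theorem stmt1 (n : ℕ) (k l γ δ : Fin n) (hkl : k ≠ l) (hγδ : γ ≠ δ)
    (a₁ a₂ : ℂ) (ha₁ : a₁ ≠ 0) (ha₂ : a₂ ≠ 0) :
    (single k l (1 : ℂ) + a₁ • single l k (1 : ℂ)) *
        (single γ δ (1 : ℂ) + a₂ • single δ γ (1 : ℂ)) =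
      (single γ δ (1 : ℂ) + a₂ • single δ γ (1 : ℂ)) *
        (single k l (1 : ℂ) + a₁ • single l k (1 : ℂ)) ↔
      (k = γ ∧ l = δ ∧ a₁ = a₂) ∨ (k = δ ∧ l = γ ∧ a₁ * a₂ = 1) ∨
        (k ≠ γ ∧ k ≠ δ ∧ l ≠ γ ∧ l ≠ δ) :=
  commute_excitation_iff hkl hγδ ha₁ ha₂
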